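/- arXiv:1707.01954 — 2 statements merged into one kernel-verified Lean document; each statement's English description precedes it below -/
import Mathlib

section
/- Let M be a nonsingular N×N real matrix whose powers are uniformly bounded: ‖M^k‖ ≤ C̃ for all k ≥ 0. Let (M_k)_{k≥1} be a sequence of N×N matrices with ‖M_k − M‖ ≤ C/σ^k for some σ > 1 and constant C > 0. Then the products M^{(k)} := M_k M_{k−1} ⋯ M_1 are uniformly bounded: there exists a finite constant Ĉ such that ‖M^{(k)}‖ ≤ Ĉ for all k ≥ 1. -/
/-!
Measure matrices by the adapted norm `ν A = sup_k ‖M ^ k * A‖`. Boundedness of the powers of `M`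
makes it equivalent to `‖·‖` (`‖A‖ ≤ ν A ≤ C̃ ‖A‖`), and `M` does not increase it. Writing
`M_k = M + (M_k - M)` therefore gives `ν (M_k A) ≤ (1 + C̃ ‖M_k - M‖) ν A`, and the product
`∏ (1 + C̃ C σ⁻ᵏ)` converges, so `ν (M^{(k)})`, hence `‖M^{(k)}‖`, stays bounded
(discrete Grönwall).
-/

open Real

theorem nonneg_of_add_le_of_smul {E : Type*} [AddCommGroup E] [Module ℝ E] {μ : E → ℝ}
    (hadd : ∀ A B, μ (A + B) ≤ μ A + μ B) (hsmul : ∀ (c : ℝ) A, μ (c • A) = |c| * μ A) (A : E) :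
    0 ≤ μ A := by
  have hzero : μ 0 = 0 := by simpa using hsmul 0 0
  have hneg : μ (-A) = μ A := by simpa using hsmul (-1) A
  have := hadd A (-A)
  rw [add_neg_cancel, hzero, hneg] at this
  linarith

theorem summable_of_nonneg_of_le_div_pow {f : ℕ → ℝ} {C σ : ℝ} (hσ : 1 < σ)
    (hf0 : ∀ j, 0 ≤ f j) (hf : ∀ j, f j ≤ C / σ ^ j) : Summable f :=
  ((summable_geometric_of_lt_one (inv_nonneg.2 (zero_le_one.trans hσ.le))
    (inv_lt_one_of_one_lt₀ hσ)).mul_left C).of_nonneg_of_le hf0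
    fun j => by simpa [div_eq_mul_inv, inv_pow] using hf j

theorem le_mul_exp_tsum_of_le_one_add_mul {u c : ℕ → ℝ} (hu0 : 0 ≤ u 0)
    (hu : ∀ n, u (n + 1) ≤ (1 + c n) * u n) (hc : ∀ n, 0 ≤ c n) (hcs : Summable c) (n : ℕ) :
    u n ≤ u 0 * exp (∑' i, c i) := by
  have hgronwall := discrete_gronwall (b := 0) hu0 (fun n _ => by simpa using hu n)
    (fun n _ => hc n) (fun _ _ => le_rfl) (Nat.zero_le n)
  simp only [Pi.zero_apply, Finset.sum_const_zero, add_zero, Nat.Ico_zero_eq_range] at hgronwall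
  exact hgronwall.trans <| mul_le_mul_of_nonneg_left
    (exp_le_exp.2 (hcs.sum_le_tsum _ fun i _ => hc i)) hu0

section AdaptedNorm

variable {R : Type*} [Ring R] {μ : R → ℝ} {M : R} {K : ℝ}

noncomputable def adaptedNorm (μ : R → ℝ) (M A : R) : ℝ := ⨆ k : ℕ, μ (M ^ k * A)

theorem bddAbove_range_pow_mul (hμ : ∀ A, 0 ≤ μ A) (hsub : ∀ A B, μ (A * B) ≤ μ A * μ B)
    (hpow : ∀ k : ℕ, μ (M ^ k) ≤ K) (A : R) : BddAbove (Set.range fun k : ℕ => μ (M ^ k * A)) :=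
  ⟨K * μ A, by
    rintro _ ⟨k, rfl⟩
    exact (hsub _ _).trans (mul_le_mul_of_nonneg_right (hpow k) (hμ A))⟩

theorem le_adaptedNorm (hμ : ∀ A, 0 ≤ μ A) (hsub : ∀ A B, μ (A * B) ≤ μ A * μ B)
    (hpow : ∀ k : ℕ, μ (M ^ k) ≤ K) (A : R) : μ A ≤ adaptedNorm μ M A := by
  simpa [adaptedNorm] using le_ciSup (bddAbove_range_pow_mul hμ hsub hpow A) 0

theorem adaptedNorm_le (hμ : ∀ A, 0 ≤ μ A) (hsub : ∀ A B, μ (A * B) ≤ μ A * μ B)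
    (hpow : ∀ k : ℕ, μ (M ^ k) ≤ K) (A : R) : adaptedNorm μ M A ≤ K * μ A :=
  ciSup_le fun k => (hsub _ _).trans (mul_le_mul_of_nonneg_right (hpow k) (hμ A))

theorem adaptedNorm_mul_left_le (hμ : ∀ A, 0 ≤ μ A) (hsub : ∀ A B, μ (A * B) ≤ μ A * μ B)
    (hpow : ∀ k : ℕ, μ (M ^ k) ≤ K) (A : R) : adaptedNorm μ M (M * A) ≤ adaptedNorm μ M A :=
  ciSup_le fun k => by
    rw [← mul_assoc, ← pow_succ]
    exact le_ciSup (bddAbove_range_pow_mul hμ hsub hpow A) (k + 1)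

theorem adaptedNorm_add_le (hμ : ∀ A, 0 ≤ μ A) (hadd : ∀ A B, μ (A + B) ≤ μ A + μ B)
    (hsub : ∀ A B, μ (A * B) ≤ μ A * μ B) (hpow : ∀ k : ℕ, μ (M ^ k) ≤ K) (A B : R) :
    adaptedNorm μ M (A + B) ≤ adaptedNorm μ M A + adaptedNorm μ M B :=
  ciSup_le fun k => by
    rw [mul_add]
    exact (hadd _ _).trans (add_le_add (le_ciSup (bddAbove_range_pow_mul hμ hsub hpow A) k)
      (le_ciSup (bddAbove_range_pow_mul hμ hsub hpow B) k))

theorem adaptedNorm_mul_le (hμ : ∀ A, 0 ≤ μ A) (hsub : ∀ A B, μ (A * B) ≤ μ A * μ B)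
    (hpow : ∀ k : ℕ, μ (M ^ k) ≤ K) (A B : R) :
    adaptedNorm μ M (A * B) ≤ adaptedNorm μ M A * μ B :=
  ciSup_le fun k => by
    rw [← mul_assoc]
    exact (hsub _ _).trans
      (mul_le_mul_of_nonneg_right (le_ciSup (bddAbove_range_pow_mul hμ hsub hpow A) k) (hμ B))

theorem adaptedNorm_mul_le_one_add_mul (hμ : ∀ A, 0 ≤ μ A) (hadd : ∀ A B, μ (A + B) ≤ μ A + μ B)
    (hsub : ∀ A B, μ (A * B) ≤ μ A * μ B) (hpow : ∀ k : ℕ, μ (M ^ k) ≤ K) (B A : R) :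
    adaptedNorm μ M (B * A) ≤ (1 + K * μ (B - M)) * adaptedNorm μ M A := by
  have hperturb : adaptedNorm μ M (B - M) ≤ K * μ (B - M) := adaptedNorm_le hμ hsub hpow _
  have hA : μ A ≤ adaptedNorm μ M A := le_adaptedNorm hμ hsub hpow A
  calc adaptedNorm μ M (B * A) = adaptedNorm μ M (M * A + (B - M) * A) := by
        rw [← add_mul, add_sub_cancel]
    _ ≤ adaptedNorm μ M (M * A) + adaptedNorm μ M ((B - M) * A) :=
        adaptedNorm_add_le hμ hadd hsub hpow _ _
    _ ≤ adaptedNorm μ M A + K * μ (B - M) * adaptedNorm μ M A := by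
        refine add_le_add (adaptedNorm_mul_left_le hμ hsub hpow A) ?_
        refine (adaptedNorm_mul_le hμ hsub hpow _ _).trans (mul_le_mul hperturb hA (hμ A) ?_)
        exact (hμ _).trans ((le_adaptedNorm hμ hsub hpow _).trans hperturb)
    _ = (1 + K * μ (B - M)) * adaptedNorm μ M A := by ring

end AdaptedNorm

theorem stmt2_general (N : ℕ) (M : Matrix (Fin N) (Fin N) ℝ)
    (μnorm : Matrix (Fin N) (Fin N) ℝ → ℝ)
    (hadd : ∀ A B, μnorm (A + B) ≤ μnorm A + μnorm B)
    (hsmul : ∀ (c : ℝ) A, μnorm (c • A) = |c| * μnorm A)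
    (hsub : ∀ A B, μnorm (A * B) ≤ μnorm A * μnorm B)
    (Ct : ℝ) (hCt : ∀ k : ℕ, μnorm (M ^ k) ≤ Ct)
    (Ms : ℕ → Matrix (Fin N) (Fin N) ℝ) (C σ : ℝ) (hσ : 1 < σ)
    (hclose : ∀ k : ℕ, 1 ≤ k → μnorm (Ms k - M) ≤ C / σ ^ k)
    (P : ℕ → Matrix (Fin N) (Fin N) ℝ)
    (hP : ∀ k, P (k + 1) = Ms (k + 1) * P k) :
    ∃ Ch : ℝ, ∀ k : ℕ, 1 ≤ k → μnorm (P k) ≤ Ch := by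
  have hμ := nonneg_of_add_le_of_smul hadd hsmul
  have hCt0 : 0 ≤ Ct := (hμ _).trans (hCt 0)
  set c : ℕ → ℝ := fun j => Ct * μnorm (Ms (j + 1) - M)
  have hc0 : ∀ j, 0 ≤ c j := fun j => mul_nonneg hCt0 (hμ _)
  have hcs : Summable c := summable_of_nonneg_of_le_div_pow (C := Ct * C / σ) hσ hc0 fun j =>
    calc c j ≤ Ct * (C / σ ^ (j + 1)) := mul_le_mul_of_nonneg_left (hclose _ j.succ_pos) hCt0
      _ = Ct * C / σ / σ ^ j := by rw [pow_succ', ← div_div]; ring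
  have hstep : ∀ k, adaptedNorm μnorm M (P (k + 1)) ≤ (1 + c k) * adaptedNorm μnorm M (P k) :=
    fun k => hP k ▸ adaptedNorm_mul_le_one_add_mul hμ hadd hsub hCt _ _
  have hP0nonneg : 0 ≤ adaptedNorm μnorm M (P 0) := (hμ _).trans (le_adaptedNorm hμ hsub hCt _)
  exact ⟨adaptedNorm μnorm M (P 0) * exp (∑' j, c j), fun k _ =>
    (le_adaptedNorm hμ hsub hCt _).trans <| le_mul_exp_tsum_of_le_one_add_mul
      (u := fun k => adaptedNorm μnorm M (P k)) hP0nonneg hstep hc0 hcs k⟩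

/-- If the nonsingular matrix `M` has uniformly bounded powers
(`μnorm (M^k) ≤ C̃`) and `μnorm (M_k − M) ≤ C/σ^k` with `σ > 1`, then the ordered
products `M^{(k)} = M_k ⋯ M_1` are uniformly bounded. -/
theorem stmt2 (N : ℕ) (M : Matrix (Fin N) (Fin N) ℝ) (hM : IsUnit M.det)
    (μnorm : Matrix (Fin N) (Fin N) ℝ → ℝ)
    (hadd : ∀ A B, μnorm (A + B) ≤ μnorm A + μnorm B)
    (hsmul : ∀ (c : ℝ) A, μnorm (c • A) = |c| * μnorm A)
    (hdef : ∀ A, μnorm A = 0 ↔ A = 0)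
    (hsub : ∀ A B, μnorm (A * B) ≤ μnorm A * μnorm B)
    (hone : μnorm 1 = 1)
    (Ct : ℝ) (hCt : ∀ k : ℕ, μnorm (M ^ k) ≤ Ct)
    (Ms : ℕ → Matrix (Fin N) (Fin N) ℝ) (C σ : ℝ) (hσ : 1 < σ) (hC : 0 < C)
    (hclose : ∀ k : ℕ, 1 ≤ k → μnorm (Ms k - M) ≤ C / σ ^ k)
    (P : ℕ → Matrix (Fin N) (Fin N) ℝ)
    (hP0 : P 0 = 1) (hP : ∀ k, P (k + 1) = Ms (k + 1) * P k) :
    ∃ Ch : ℝ, ∀ k : ℕ, 1 ≤ k → μnorm (P k) ≤ Ch :=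
  stmt2_general N M μnorm hadd hsmul hsub Ct hCt Ms C σ hσ hclose P hP
end

section
/- Let S ∈ ℝ^{N×N} be nonsingular with uniformly bounded powers, let S_k satisfy ‖S_k − S‖ ≤ C/σ^k with σ > 1, and suppose lim_{ℓ→∞} S^ℓ v exists for all v ∈ ℝ^N. Define u_{k+1} := lim_{ℓ→∞} S^ℓ S^{(k)} d for fixed d, where S^{(k)} = S_k ⋯ S_1. Then ‖u_{k+1} − u_k‖ ≤ C̃/σ^k for a constant C̃, and hence (u_k) converges. -/
/-!
Writing `S_{j+1} = S + (S_{j+1} - S)` and unrolling `P_{k+1} = S_{k+1} P_k` gives the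
variation-of-constants formula `P_k = S^k P_0 + ∑_{j<k} S^{k-1-j} (S_{j+1} - S) P_j`. Since the
powers of `S` are bounded by `Cb`, a discrete Grönwall argument bounds `‖P_k‖` by
`Cb ‖P_0‖ ∏_j (1 + Cb C σ^{-(j+1)}) ≤ Cb ‖P_0‖ exp (Cb ∑_j C σ^{-(j+1)})`, uniformly in `k`.
As `S^ℓ S P_{k-1} d` is the sequence `S^ℓ P_{k-1} d` shifted by one,
`u_{k+1} - u_k = lim_ℓ S^ℓ (S_k - S) P_{k-1} d`, whose norm is `O(σ^{-k})`; a geometrically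
decaying sequence of increments is Cauchy.
-/

open Filter Topology

/-- The ∞-operator norm (maximum absolute row sum) of a real matrix. -/
noncomputable def infNorm {a b : ℕ} (A : Matrix (Fin a) (Fin b) ℝ) : ℝ :=
  ⨆ i, ∑ j, |A i j|

open Finset

section PerturbedProducts

variable {R : Type*} [NormedRing R] {S : R} {T P : ℕ → R}

theorem perturbed_product_eq (hP : ∀ k, P (k + 1) = T (k + 1) * P k) (k : ℕ) :
    P k = S ^ k * P 0 + ∑ j ∈ range k, S ^ (k - 1 - j) * ((T (j + 1) - S) * P j) := by
  induction k with
  | zero => simp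
  | succ k ih =>
    have hsplit : P (k + 1) = S * P k + (T (k + 1) - S) * P k := by
      rw [hP, sub_mul, add_sub_cancel]
    rw [hsplit]
    nth_rw 1 [ih]
    rw [mul_add, mul_sum, ← mul_assoc, ← pow_succ', sum_range_succ, Nat.add_sub_cancel,
      Nat.sub_self, pow_zero, one_mul, add_assoc]
    congr 2
    refine sum_congr rfl fun j hj => ?_
    rw [← mul_assoc, ← pow_succ']
    congr 2
    have := mem_range.1 hj
    omega

theorem norm_perturbed_product_le {Cb : ℝ} {ε : ℕ → ℝ} (hP : ∀ k, P (k + 1) = T (k + 1) * P k)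
    (hCb : ∀ k, ‖S ^ k‖ ≤ Cb) (hε : ∀ k, ‖T (k + 1) - S‖ ≤ ε k) (k : ℕ) :
    ‖P k‖ ≤ Cb * ‖P 0‖ * ∏ j ∈ range k, (1 + Cb * ε j) := by
  have hCb0 : 0 ≤ Cb := (norm_nonneg _).trans (hCb 0)
  have hprod : ∀ k, ∏ j ∈ range k, (1 + Cb * ε j) =
      1 + ∑ j ∈ range k, Cb * ε j * ∏ i ∈ range j, (1 + Cb * ε i) := fun k => by
    induction k with
    | zero => simp
    | succ k ih => rw [prod_range_succ, sum_range_succ, ih]; ring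
  induction k using Nat.strong_induction_on with
  | _ k ih =>
    have hterm : ∀ j ∈ range k, ‖S ^ (k - 1 - j) * ((T (j + 1) - S) * P j)‖ ≤
        Cb * ε j * (Cb * ‖P 0‖ * ∏ i ∈ range j, (1 + Cb * ε i)) := fun j hj => by
      have hε0 := (norm_nonneg _).trans (hε j)
      calc _ ≤ ‖S ^ (k - 1 - j)‖ * (‖T (j + 1) - S‖ * ‖P j‖) :=
            (norm_mul_le _ _).trans (mul_le_mul_of_nonneg_left (norm_mul_le _ _) (norm_nonneg _))
        _ ≤ Cb * (ε j * (Cb * ‖P 0‖ * ∏ i ∈ range j, (1 + Cb * ε i))) := by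
          gcongr ?_ * (?_ * ?_)
          exacts [hCb _, hε j, ih j (mem_range.1 hj)]
        _ = _ := by ring
    calc ‖P k‖ ≤ ‖S ^ k * P 0‖ + ∑ j ∈ range k, ‖S ^ (k - 1 - j) * ((T (j + 1) - S) * P j)‖ := by
          rw [perturbed_product_eq hP k]
          exact (norm_add_le _ _).trans (add_le_add le_rfl (norm_sum_le _ _))
      _ ≤ Cb * ‖P 0‖ + ∑ j ∈ range k, Cb * ε j * (Cb * ‖P 0‖ * ∏ i ∈ range j, (1 + Cb * ε i)) := by
          gcongr ?_ + ?_
          · exact (norm_mul_le _ _).trans (mul_le_mul_of_nonneg_right (hCb k) (norm_nonneg _))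
          · exact sum_le_sum hterm
      _ = Cb * ‖P 0‖ * ∏ j ∈ range k, (1 + Cb * ε j) := by
          rw [hprod, mul_add, mul_one, mul_sum]
          exact congrArg _ (sum_congr rfl fun j _ => by ring)

theorem exists_bound_norm_perturbed_product {Cb : ℝ} {ε : ℕ → ℝ}
    (hP : ∀ k, P (k + 1) = T (k + 1) * P k) (hCb : ∀ k, ‖S ^ k‖ ≤ Cb)
    (hε : ∀ k, ‖T (k + 1) - S‖ ≤ ε k) (hsum : Summable ε) : ∃ M, ∀ k, ‖P k‖ ≤ M := by
  have hCb0 : 0 ≤ Cb := (norm_nonneg _).trans (hCb 0)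
  have hε0 : ∀ k, 0 ≤ Cb * ε k := fun k => mul_nonneg hCb0 ((norm_nonneg _).trans (hε k))
  refine ⟨Cb * ‖P 0‖ * Real.exp (∑' j, Cb * ε j), fun k => ?_⟩
  calc ‖P k‖ ≤ Cb * ‖P 0‖ * ∏ j ∈ range k, (1 + Cb * ε j) := norm_perturbed_product_le hP hCb hε k
    _ ≤ Cb * ‖P 0‖ * Real.exp (∑ j ∈ range k, Cb * ε j) := by
        gcongr
        exact Real.prod_one_add_le_exp_sum _ fun j => hε0 j
    _ ≤ Cb * ‖P 0‖ * Real.exp (∑' j, Cb * ε j) := by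
        gcongr
        exact (hsum.mul_left Cb).sum_le_tsum _ fun j _ => hε0 j

end PerturbedProducts

theorem exists_tendsto_of_norm_sub_le_div_pow {E : Type*} [NormedAddCommGroup E] [CompleteSpace E]
    {u : ℕ → E} {c σ : ℝ} (hσ : 1 < σ) (h : ∀ k, 1 ≤ k → ‖u (k + 1) - u k‖ ≤ c / σ ^ k) :
    ∃ l, Tendsto u atTop (𝓝 l) := by
  have hcauchy : CauchySeq fun n => u (n + 1) := by
    refine cauchySeq_of_le_geometric σ⁻¹ (c / σ) (inv_lt_one_of_one_lt₀ hσ) fun n => ?_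
    rw [dist_comm, dist_eq_norm]
    refine (h (n + 1) (Nat.le_add_left 1 n)).trans_eq ?_
    rw [pow_succ', inv_pow]
    field_simp
  obtain ⟨l, hl⟩ := cauchySeq_tendsto_of_complete hcauchy
  exact ⟨l, (tendsto_add_atTop_iff_nat 1).1 hl⟩

attribute [local instance] Matrix.linftyOpNormedAddCommGroup Matrix.linftyOpNormedRing
  Matrix.linftyOpNormedSpace

theorem infNorm_eq_linfty_opNorm {a b : ℕ} (A : Matrix (Fin a) (Fin b) ℝ) : infNorm A = ‖A‖ := by
  have hrow : ∀ i, ∑ j, |A i j| = ((∑ j, ‖A i j‖₊ : NNReal) : ℝ) := fun i => by simp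
  have hnonneg : 0 ≤ infNorm A :=
    Real.iSup_nonneg fun _ => Finset.sum_nonneg fun _ _ => abs_nonneg _
  rw [Matrix.linfty_opNorm_def]
  refine le_antisymm (Real.iSup_le (fun i => ?_) (NNReal.coe_nonneg _)) ?_
  · rw [hrow]
    exact NNReal.coe_le_coe.2 (Finset.le_sup (f := fun i => ∑ j, ‖A i j‖₊) (Finset.mem_univ i))
  · refine (NNReal.coe_le_coe (r₂ := ⟨infNorm A, hnonneg⟩)).2 (Finset.sup_le fun i _ => ?_)
    have h := le_ciSup (f := fun i => ∑ j, |A i j|) (Set.finite_range _).bddAbove i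
    rw [hrow] at h
    exact NNReal.coe_le_coe.1 h

theorem Matrix.tendsto_pow_mul_sub_mul {l m α : Type*} [Fintype l] [DecidableEq l] [Ring α]
    [TopologicalSpace α] [IsTopologicalAddGroup α] {S T : Matrix l l α} {x u v : Matrix l m α}
    (hu : Tendsto (fun k => S ^ k * (T * x)) atTop (𝓝 u))
    (hv : Tendsto (fun k => S ^ k * x) atTop (𝓝 v)) :
    Tendsto (fun k => S ^ k * ((T - S) * x)) atTop (𝓝 (u - v)) :=
  (hu.sub ((tendsto_add_atTop_iff_nat 1).2 hv)).congr fun k => by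
    simp only [pow_succ, Matrix.sub_mul, Matrix.mul_sub, Matrix.mul_assoc]

theorem Matrix.linfty_opNorm_le_of_tendsto_pow_mul {l m : Type*} [Fintype l] [DecidableEq l]
    [Fintype m] {S : Matrix l l ℝ} {Cb : ℝ} (hCb : ∀ k, ‖S ^ k‖ ≤ Cb) {v w : Matrix l m ℝ}
    (h : Tendsto (fun k => S ^ k * v) atTop (𝓝 w)) : ‖w‖ ≤ Cb * ‖v‖ :=
  le_of_tendsto' h.norm fun k =>
    (Matrix.linfty_opNorm_mul _ _).trans (mul_le_mul_of_nonneg_right (hCb k) (norm_nonneg v))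

theorem stmt8_general (N : ℕ) (S : Matrix (Fin N) (Fin N) ℝ)
    (Cb : ℝ) (hCb : ∀ k : ℕ, infNorm (S ^ k) ≤ Cb)
    (Ss : ℕ → Matrix (Fin N) (Fin N) ℝ) (C σ : ℝ) (hσ : 1 < σ)
    (hclose : ∀ k : ℕ, 1 ≤ k → infNorm (Ss k - S) ≤ C / σ ^ k)
    (d : Matrix (Fin N) (Fin 3) ℝ)
    (P : ℕ → Matrix (Fin N) (Fin N) ℝ)
    (hP : ∀ k, P (k + 1) = Ss (k + 1) * P k)
    (u : ℕ → Matrix (Fin N) (Fin 3) ℝ)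
    (hu : ∀ k : ℕ, Tendsto (fun ℓ => S ^ ℓ * (P k * d)) atTop (nhds (u (k + 1)))) :
    (∃ Ct : ℝ, ∀ k : ℕ, 1 ≤ k → infNorm (u (k + 1) - u k) ≤ Ct / σ ^ k) ∧
    ∃ l, Tendsto u atTop (nhds l) := by
  simp only [infNorm_eq_linfty_opNorm] at hCb hclose ⊢
  have hsum : Summable fun k : ℕ => C / σ ^ (k + 1) := by
    simp_rw [div_eq_mul_inv, ← inv_pow]
    exact (summable_nat_add_iff 1).2 ((summable_geometric_of_lt_one
      (inv_nonneg.2 (by linarith)) (inv_lt_one_of_one_lt₀ hσ)).mul_left C)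
  obtain ⟨M, hM⟩ :=
    exists_bound_norm_perturbed_product hP hCb (fun k => hclose (k + 1) k.succ_pos) hsum
  have hdiff : ∀ k, 1 ≤ k → ‖u (k + 1) - u k‖ ≤ Cb * C * M * ‖d‖ / σ ^ k := by
    intro k hk
    obtain ⟨m, rfl⟩ := Nat.exists_eq_add_of_le' hk
    have hlim := Matrix.tendsto_pow_mul_sub_mul
      (by simpa only [hP, Matrix.mul_assoc] using hu (m + 1)) (hu m)
    have hCb0 : 0 ≤ Cb := (norm_nonneg _).trans (hCb 0)
    have hC0 : 0 ≤ C / σ ^ (m + 1) := (norm_nonneg _).trans (hclose (m + 1) hk)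
    calc ‖u (m + 1 + 1) - u (m + 1)‖ ≤ Cb * ‖(Ss (m + 1) - S) * (P m * d)‖ :=
          Matrix.linfty_opNorm_le_of_tendsto_pow_mul hCb hlim
      _ ≤ Cb * (‖Ss (m + 1) - S‖ * (‖P m‖ * ‖d‖)) := by
          gcongr
          exact (Matrix.linfty_opNorm_mul _ _).trans
            (mul_le_mul_of_nonneg_left (Matrix.linfty_opNorm_mul _ _) (norm_nonneg _))
      _ ≤ Cb * (C / σ ^ (m + 1) * (M * ‖d‖)) := by gcongr; exacts [hclose (m + 1) hk, hM m]
      _ = Cb * C * M * ‖d‖ / σ ^ (m + 1) := by ring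
  exact ⟨⟨_, hdiff⟩, exists_tendsto_of_norm_sub_le_div_pow hσ hdiff⟩

/-- With `S` nonsingular with uniformly bounded powers,
`‖S_k − S‖ ≤ C/σ^k` (`σ > 1`), `S^ℓ v` convergent for every `v`, and
`u_{k+1} := lim_ℓ S^ℓ S^{(k)} d`, one has `‖u_{k+1} − u_k‖ ≤ C̃/σ^k`
for a constant `C̃`, and hence `(u_k)` converges. -/
theorem stmt8 (N : ℕ) (S : Matrix (Fin N) (Fin N) ℝ) (hS : IsUnit S.det)
    (Cb : ℝ) (hCb : ∀ k : ℕ, infNorm (S ^ k) ≤ Cb)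
    (Ss : ℕ → Matrix (Fin N) (Fin N) ℝ) (C σ : ℝ) (hσ : 1 < σ) (hC : 0 < C)
    (hclose : ∀ k : ℕ, 1 ≤ k → infNorm (Ss k - S) ≤ C / σ ^ k)
    (d : Matrix (Fin N) (Fin 3) ℝ)
    (P : ℕ → Matrix (Fin N) (Fin N) ℝ)
    (hP0 : P 0 = 1) (hP : ∀ k, P (k + 1) = Ss (k + 1) * P k)
    (hlim : ∀ v : Matrix (Fin N) (Fin 3) ℝ,
      ∃ w, Tendsto (fun ℓ => S ^ ℓ * v) atTop (nhds w))
    (u : ℕ → Matrix (Fin N) (Fin 3) ℝ)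
    (hu : ∀ k : ℕ, Tendsto (fun ℓ => S ^ ℓ * (P k * d)) atTop (nhds (u (k + 1)))) :
    (∃ Ct : ℝ, ∀ k : ℕ, 1 ≤ k → infNorm (u (k + 1) - u k) ≤ Ct / σ ^ k) ∧
    ∃ l, Tendsto u atTop (nhds l) :=
  stmt8_general N S Cb hCb Ss C σ hσ hclose d P hP u hu
end
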